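/- Let φ: (M³, g̃) → (N²,h) be a submersive harmonic morphism with dilation λ and integrability 2-form Ω̃. Let η be a given 1-form on M and θ a 1-form satisfying dθ + η ∧ θ = Ω̃, with θ(Ũ) ≠ 0 everywhere for Ũ the g̃-unit vertical field. Set g = (φ*h)/λ² + θ². Then φ: (M³,g) → (N²,h) is semi-conformal, and the mean curvature of its fibres equals the g-horizontal part of η♯. -/

import Mathlib

open scoped BigOperators

noncomputable section

/-- Partial derivative of `f` in the `i`-th coordinate direction. -/
def pd {n : ℕ} (f : (Fin n → ℝ) → ℝ) (i : Fin n) (x : Fin n → ℝ) : ℝ :=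
  fderiv ℝ f x (Pi.single i 1)

/-- Pointwise inverse of a metric (the components `g^{ij}`). -/
def ginv {n : ℕ} (g : (Fin n → ℝ) → Matrix (Fin n) (Fin n) ℝ) (x : Fin n → ℝ) :
    Matrix (Fin n) (Fin n) ℝ := (g x)⁻¹

/-- A smooth Riemannian metric in coordinates. -/
def IsMetric {n : ℕ} (g : (Fin n → ℝ) → Matrix (Fin n) (Fin n) ℝ) : Prop :=
  (∀ i j, ContDiff ℝ (⊤ : ℕ∞) fun x => g x i j) ∧ ∀ x, (g x).IsSymm ∧ (g x).PosDef

/-- A smooth vector field (or componentwise-smooth family). -/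
def SmoothVF {n : ℕ} (X : (Fin n → ℝ) → Fin n → ℝ) : Prop :=
  ∀ k, ContDiff ℝ (⊤ : ℕ∞) fun x => X x k

/-- Christoffel symbols `Γ^k_{ij}` of the metric `g`. -/
def christoffel {n : ℕ} (g : (Fin n → ℝ) → Matrix (Fin n) (Fin n) ℝ)
    (k i j : Fin n) (x : Fin n → ℝ) : ℝ :=
  (1 / 2) * ∑ l, ginv g x k l *
    (pd (fun y => g y l j) i x + pd (fun y => g y l i) j x - pd (fun y => g y i j) l x)

/-- Covariant derivative `(∇_X Y)^k` of the Levi-Civita connection of `g`. -/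
def covD {n : ℕ} (g : (Fin n → ℝ) → Matrix (Fin n) (Fin n) ℝ)
    (X Y : (Fin n → ℝ) → Fin n → ℝ) (x : Fin n → ℝ) (k : Fin n) : ℝ :=
  (∑ i, X x i * pd (fun y => Y y k) i x) + ∑ i, ∑ j, christoffel g k i j x * X x i * Y x j

/-- The Lie bracket of vector fields, `[X,Y]^k = X^i ∂_i Y^k - Y^i ∂_i X^k`. -/
def bracket {n : ℕ} (X Y : (Fin n → ℝ) → Fin n → ℝ) (x : Fin n → ℝ) (k : Fin n) : ℝ :=
  ∑ i, (X x i * pd (fun y => Y y k) i x - Y x i * pd (fun y => X y k) i x)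

/-- `φ : (M³,g) → (N²,h)` is semi-conformal with dilation `λ`, in the local-coordinate
characterization `g^{ij} φ^α_i φ^β_j = λ² h^{αβ}`. -/
def SemiConformal (g : (Fin 3 → ℝ) → Matrix (Fin 3) (Fin 3) ℝ)
    (h : (Fin 2 → ℝ) → Matrix (Fin 2) (Fin 2) ℝ)
    (φ : (Fin 3 → ℝ) → Fin 2 → ℝ) (lam : (Fin 3 → ℝ) → ℝ) : Prop :=
  ∀ x α β, (∑ i, ∑ j, ginv g x i j * pd (fun y => φ y α) i x * pd (fun y => φ y β) j x)
    = lam x ^ 2 * ginv h (φ x) α β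

/-- A vector field is vertical when it lies in `ker dφ`. -/
def Vertical (φ : (Fin 3 → ℝ) → Fin 2 → ℝ) (U : (Fin 3 → ℝ) → Fin 3 → ℝ) : Prop :=
  ∀ x α, (∑ i, pd (fun y => φ y α) i x * U x i) = 0

/-- A vector field of unit length for `g`. -/
def UnitField (g : (Fin 3 → ℝ) → Matrix (Fin 3) (Fin 3) ℝ)
    (U : (Fin 3 → ℝ) → Fin 3 → ℝ) : Prop :=
  ∀ x, (∑ i, ∑ j, g x i j * U x i * U x j) = 1

/-- The dual 1-form `X♭ = g(X,·)`. -/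
def flat (g : (Fin 3 → ℝ) → Matrix (Fin 3) (Fin 3) ℝ)
    (X : (Fin 3 → ℝ) → Fin 3 → ℝ) (j : Fin 3) (x : Fin 3 → ℝ) : ℝ :=
  ∑ k, g x j k * X x k

/-- Horizontal projection (relative to the unit vertical field `U`):
`H X = X - g(X,U) U`. -/
def Hproj (g : (Fin 3 → ℝ) → Matrix (Fin 3) (Fin 3) ℝ)
    (U X : (Fin 3 → ℝ) → Fin 3 → ℝ) (x : Fin 3 → ℝ) (k : Fin 3) : ℝ :=
  X x k - (∑ i, ∑ j, g x i j * X x i * U x j) * U x k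

/-- The mean curvature vector `μ = ∇_U U` of the fibres (`U` the unit vertical field). -/
def meanCurv (g : (Fin 3 → ℝ) → Matrix (Fin 3) (Fin 3) ℝ)
    (U : (Fin 3 → ℝ) → Fin 3 → ℝ) (x : Fin 3 → ℝ) (k : Fin 3) : ℝ :=
  covD g U U x k

/-- Lie derivative of the metric: `(L_E g)_{ij} = E^k ∂_k g_{ij} + g_{kj} ∂_i E^k + g_{ik} ∂_j E^k`. -/
def lieD {n : ℕ} (g : (Fin n → ℝ) → Matrix (Fin n) (Fin n) ℝ)
    (E : (Fin n → ℝ) → Fin n → ℝ) (i j : Fin n) (x : Fin n → ℝ) : ℝ :=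
  (∑ k, E x k * pd (fun y => g y i j) k x)
    + (∑ k, g x k j * pd (fun y => E y k) i x)
    + ∑ k, g x i k * pd (fun y => E y k) j x

/-- The metric `g = φ*h/λ² + θ ⊗ θ`. -/
def pullMetric (h : (Fin 2 → ℝ) → Matrix (Fin 2) (Fin 2) ℝ)
    (φ : (Fin 3 → ℝ) → Fin 2 → ℝ) (lam : (Fin 3 → ℝ) → ℝ)
    (θ : (Fin 3 → ℝ) → Fin 3 → ℝ) (x : Fin 3 → ℝ) : Matrix (Fin 3) (Fin 3) ℝ :=
  Matrix.of fun i j =>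
    (1 / lam x ^ 2) *
        (∑ α, ∑ β, h (φ x) α β * pd (fun y => φ y α) i x * pd (fun y => φ y β) j x)
      + θ x i * θ x j

/-! On `ker dφ` the metric `g = φ*h/λ² + θ²` reduces to `θ²` and on `ker θ` to `φ*h/λ²`, so
`dφ g⁻¹ dφᵀ = λ² h⁻¹`: `φ` stays semi-conformal. A `g`-unit vertical field `U` has `U♭ = εθ`
with `ε = θ(U) = ±1` locally constant, and for any unit field `g(∇_U U, ·) = U ⌟ dU♭ = ε U ⌟ dθ`.
The fibres of `φ` are `g̃`-geodesic, so `Ũ ⌟ Ω̃ = 0`, hence `U ⌟ dθ = -U ⌟ (η ∧ θ) = εη - η(U) θ`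
and `g(∇_U U, ·) = η - η(U) U♭`, which is the horizontal part of `η♯` with its index lowered. -/

open Matrix

theorem Matrix.mul_mul_transpose_apply {m n R : Type*} [Fintype n] [CommSemiring R]
    (P : Matrix m n R) (M : Matrix n n R) (α β : m) :
    (P * M * Pᵀ) α β = ∑ i, ∑ j, M i j * P α i * P β j := by
  simp only [Matrix.mul_apply, Matrix.transpose_apply, Finset.sum_mul]
  rw [Finset.sum_comm]
  exact Finset.sum_congr rfl fun _ _ => Finset.sum_congr rfl fun _ _ => by ring

theorem Matrix.dotProduct_mulVec_eq_sum_sum {n R : Type*} [Fintype n] [CommSemiring R]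
    (M : Matrix n n R) (a b : n → R) : a ⬝ᵥ (M *ᵥ b) = ∑ i, ∑ j, M i j * a i * b j := by
  simp only [dotProduct, mulVec, Finset.mul_sum]
  exact Finset.sum_congr rfl fun _ _ => Finset.sum_congr rfl fun _ _ => by ring

section LinearAlgebra

variable {m n : Type*} [Fintype m] [Fintype n]

theorem Matrix.ker_mulVecLin_eq_span_singleton {K : Type*} [Field K] [DecidableEq n]
    {P : Matrix m n K} (hP : Function.Surjective P.mulVec)
    (hcard : Fintype.card n = Fintype.card m + 1) {u : n → K} (hu : P *ᵥ u = 0)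
    (hu0 : u ≠ 0) : LinearMap.ker P.mulVecLin = Submodule.span K {u} := by
  have hrank := LinearMap.finrank_range_add_finrank_ker P.mulVecLin
  rw [LinearMap.range_eq_top.mpr hP] at hrank
  simp only [finrank_top, Module.finrank_fintype_fun_eq_card, hcard] at hrank
  refine (Submodule.eq_of_le_of_finrank_eq ?_ ?_).symm
  · simpa [Submodule.span_le] using hu
  · rw [finrank_span_singleton hu0]; omega

theorem Matrix.eq_of_mul_eq_mul_of_surjective {l R : Type*} [CommSemiring R]
    {P : Matrix m n R} (hP : Function.Surjective P.mulVec) {X Y : Matrix l m R}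
    (h : X * P = Y * P) : X = Y :=
  ext_iff_mulVec.mpr fun w => by
    obtain ⟨v, rfl⟩ := hP w
    rw [mulVec_mulVec, mulVec_mulVec, h]

variable (P : Matrix m n ℝ) (A : Matrix m m ℝ) (t : n → ℝ)

theorem Matrix.mulVec_add_vecMulVec_of_mulVec_eq_zero {v : n → ℝ} (hv : P *ᵥ v = 0) :
    (Pᵀ * A * P + vecMulVec t t) *ᵥ v = (t ⬝ᵥ v) • t := by
  rw [add_mulVec, ← mulVec_mulVec, hv, mulVec_zero, zero_add, vecMulVec_mulVec,
    op_smul_eq_smul, dotProduct_comm]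

theorem Matrix.dotProduct_add_vecMulVec_mulVec (z : n → ℝ) :
    z ⬝ᵥ ((Pᵀ * A * P + vecMulVec t t) *ᵥ z) = (P *ᵥ z) ⬝ᵥ (A *ᵥ (P *ᵥ z)) + (t ⬝ᵥ z) ^ 2 := by
  rw [add_mulVec, ← mulVec_mulVec, ← mulVec_mulVec, dotProduct_add, dotProduct_mulVec z Pᵀ,
    vecMul_transpose, vecMulVec_mulVec, op_smul_eq_smul, dotProduct_smul, smul_eq_mul,
    dotProduct_comm z t, sq]

variable [DecidableEq n] {P A t}

theorem Matrix.isUnit_add_vecMulVec {u : n → ℝ} (hA : A.PosDef)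
    (hker : LinearMap.ker P.mulVecLin = Submodule.span ℝ {u}) (htu : t ⬝ᵥ u ≠ 0) :
    IsUnit (Pᵀ * A * P + vecMulVec t t) := by
  refine mulVec_injective_iff_isUnit.mp fun v w hvw => sub_eq_zero.mp ?_
  set z := v - w
  have hquad : (P *ᵥ z) ⬝ᵥ (A *ᵥ (P *ᵥ z)) + (t ⬝ᵥ z) ^ 2 = 0 := by
    rw [← dotProduct_add_vecMulVec_mulVec, mulVec_sub, hvw, sub_self, dotProduct_zero]
  have hPz : P *ᵥ z = 0 := by
    by_contra hne
    have := hA.dotProduct_mulVec_pos hne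
    rw [star_trivial] at this
    nlinarith [sq_nonneg (t ⬝ᵥ z)]
  have htz : t ⬝ᵥ z = 0 := by
    rw [hPz, mulVec_zero, dotProduct_zero, zero_add] at hquad
    exact pow_eq_zero_iff two_ne_zero |>.mp hquad
  obtain ⟨c, hc⟩ := Submodule.mem_span_singleton.mp (hker ▸ hPz : z ∈ Submodule.span ℝ {u})
  rw [← hc, dotProduct_smul, smul_eq_mul, mul_eq_zero] at htz
  rw [← hc, htz.resolve_right htu, zero_smul]

/-- With `G = Pᵀ A P + t tᵀ`: since `G u = (t ⬝ u) t`, `G⁻¹ Pᵀ A P = 1 - u tᵀ / (t ⬝ u)`, and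
multiplying by `P` on the left kills the correction term. -/
theorem Matrix.mul_inv_add_vecMulVec_mul_transpose [DecidableEq m] {u : n → ℝ}
    (hP : Function.Surjective P.mulVec) (hA : A.PosDef)
    (hker : LinearMap.ker P.mulVecLin = Submodule.span ℝ {u}) (htu : t ⬝ᵥ u ≠ 0) :
    P * (Pᵀ * A * P + vecMulVec t t)⁻¹ * Pᵀ = A⁻¹ := by
  set G := Pᵀ * A * P + vecMulVec t t
  have hG : IsUnit G.det := (isUnit_iff_isUnit_det G).mp (isUnit_add_vecMulVec hA hker htu)
  have hPu : P *ᵥ u = 0 := by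
    simpa using (hker.symm ▸ Submodule.mem_span_singleton_self u : u ∈ LinearMap.ker P.mulVecLin)
  have htt : vecMulVec t t = (t ⬝ᵥ u)⁻¹ • (G * vecMulVec u t) := by
    rw [mul_vecMulVec, mulVec_add_vecMulVec_of_mulVec_eq_zero P A t hPu, smul_vecMulVec,
      smul_smul, inv_mul_cancel₀ htu, one_smul]
  have hGinv : G⁻¹ * (Pᵀ * A * P) = 1 - (t ⬝ᵥ u)⁻¹ • vecMulVec u t := by
    rw [show Pᵀ * A * P = G - vecMulVec t t by simp [G], mul_sub, nonsing_inv_mul G hG, htt,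
      mul_smul_comm, nonsing_inv_mul_cancel_left G _ hG]
  refine inv_eq_left_inv (eq_of_mul_eq_mul_of_surjective hP ?_) |>.symm
  calc P * G⁻¹ * Pᵀ * A * P = P * (G⁻¹ * (Pᵀ * A * P)) := by simp only [Matrix.mul_assoc]
    _ = (1 : Matrix m m ℝ) * P := by
      rw [hGinv, Matrix.mul_sub, Matrix.mul_smul, mul_vecMulVec, hPu]
      simp

end LinearAlgebra

section Calculus

variable {n : ℕ} {x : Fin n → ℝ}

theorem pd_mul {f f' : (Fin n → ℝ) → ℝ} (hf : DifferentiableAt ℝ f x)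
    (hf' : DifferentiableAt ℝ f' x) (i : Fin n) :
    pd (fun y => f y * f' y) i x = pd f i x * f' x + f x * pd f' i x := by
  simp only [pd, fderiv_fun_mul hf hf', _root_.add_apply, _root_.smul_apply, smul_eq_mul]
  ring

theorem pd_sum {ι : Type*} [Fintype ι] {f : ι → (Fin n → ℝ) → ℝ}
    (hf : ∀ k, DifferentiableAt ℝ (f k) x) (i : Fin n) :
    pd (fun y => ∑ k, f k y) i x = ∑ k, pd (f k) i x := by
  simp [pd, fderiv_fun_sum (fun k _ => hf k)]

theorem pd_eq_zero_of_sq_eq_one {f : (Fin n → ℝ) → ℝ} (hf : DifferentiableAt ℝ f x)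
    (hsq : ∀ y, f y ^ 2 = 1) (i : Fin n) : pd f i x = 0 := by
  have hconst : pd (fun y => f y * f y) i x = 0 := by
    simp [pd, show (fun y => f y * f y) = fun _ => (1 : ℝ) from funext fun y => by
      rw [← sq, hsq]]
  rw [pd_mul hf hf] at hconst
  have hfx : f x ≠ 0 := fun h0 => by simpa [h0] using hsq x
  have hprod : f x * pd f i x = 0 := by linarith [mul_comm (pd f i x) (f x)]
  exact (mul_eq_zero.mp hprod).resolve_left hfx

end Calculus

def dForm {n : ℕ} (ω : (Fin n → ℝ) → Fin n → ℝ) (x : Fin n → ℝ) (i j : Fin n) : ℝ :=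
  pd (fun y => ω y j) i x - pd (fun y => ω y i) j x

def lowerIndex {n : ℕ} (g : (Fin n → ℝ) → Matrix (Fin n) (Fin n) ℝ)
    (X : (Fin n → ℝ) → Fin n → ℝ) (y : Fin n → ℝ) (k : Fin n) : ℝ :=
  ∑ l, g y k l * X y l

theorem dForm_mul_of_pd_eq_zero {n : ℕ} {x : Fin n → ℝ} {f : (Fin n → ℝ) → ℝ}
    {ω : (Fin n → ℝ) → Fin n → ℝ} (hf : DifferentiableAt ℝ f x)
    (hω : ∀ k, DifferentiableAt ℝ (fun y => ω y k) x) (hf0 : ∀ i, pd f i x = 0) (i j : Fin n) :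
    dForm (fun y k => f y * ω y k) x i j = f x * dForm ω x i j := by
  simp only [dForm, pd_mul hf (hω _), hf0]
  ring

section LeviCivita

variable {n : ℕ} {g : (Fin n → ℝ) → Matrix (Fin n) (Fin n) ℝ} {X : (Fin n → ℝ) → Fin n → ℝ}
  {x : Fin n → ℝ}

theorem sum_mul_christoffel (hinv : g x * ginv g x = 1) (m i j : Fin n) :
    ∑ k, g x m k * christoffel g k i j x = (1 / 2) *
      (pd (fun y => g y m j) i x + pd (fun y => g y m i) j x - pd (fun y => g y i j) m x) := by
  calc ∑ k, g x m k * christoffel g k i j x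
      = (1 / 2) * ∑ l, (g x * ginv g x) m l *
          (pd (fun y => g y l j) i x + pd (fun y => g y l i) j x - pd (fun y => g y i j) l x) := by
        simp only [christoffel, Matrix.mul_apply, Finset.mul_sum, Finset.sum_mul]
        rw [Finset.sum_comm]
        exact Finset.sum_congr rfl fun _ _ => Finset.sum_congr rfl fun _ _ => by ring
    _ = _ := by simp [hinv, Matrix.one_apply]

variable (hg : ∀ i j, DifferentiableAt ℝ (fun y => g y i j) x)
  (hX : ∀ k, DifferentiableAt ℝ (fun y => X y k) x)
include hg hX

theorem pd_sum_mul (p q : Fin n) :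
    pd (fun y => ∑ k, g y p k * X y k) q x =
      ∑ k, (pd (fun y => g y p k) q x * X x k + g x p k * pd (fun y => X y k) q x) := by
  rw [pd_sum fun k => (hg p k).fun_mul (hX k)]
  exact Finset.sum_congr rfl fun k _ => pd_mul (hg p k) (hX k) q

theorem pd_sum_sum_mul (m : Fin n) :
    pd (fun y => ∑ i, ∑ j, g y i j * X y i * X y j) m x =
      ∑ i, ∑ j, (pd (fun y => g y i j) m x * X x i * X x j
        + g x i j * pd (fun y => X y i) m x * X x j
        + g x i j * X x i * pd (fun y => X y j) m x) := by
  rw [pd_sum fun i => DifferentiableAt.fun_sum fun j _ => ((hg i j).fun_mul (hX i)).fun_mul (hX j)]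
  refine Finset.sum_congr rfl fun i _ => ?_
  rw [pd_sum fun j => ((hg i j).fun_mul (hX i)).fun_mul (hX j)]
  refine Finset.sum_congr rfl fun j _ => ?_
  rw [pd_mul ((hg i j).fun_mul (hX i)) (hX j), pd_mul (hg i j) (hX i)]
  ring

/-- `g(∇_X X, ∂_m) = dX♭(X, ∂_m) + ½ ∂_m g(X, X)`. -/
theorem sum_mul_covD_self (hsym : ∀ i j, g x i j = g x j i) (hinv : g x * ginv g x = 1)
    (m : Fin n) :
    ∑ k, g x m k * covD g X X x k =
      ∑ i, X x i * dForm (lowerIndex g X) x i m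
      + (1 / 2) * pd (fun y => ∑ i, ∑ j, g y i j * X y i * X y j) m x := by
  set A := ∑ i, ∑ j, pd (fun y => g y m j) i x * X x i * X x j
  set A' := ∑ i, ∑ j, pd (fun y => g y m i) j x * X x i * X x j with hA'
  set B := ∑ i, ∑ j, pd (fun y => g y i j) m x * X x i * X x j
  set C := ∑ i, ∑ j, g x m j * X x i * pd (fun y => X y j) i x
  set D := ∑ i, ∑ j, g x i j * X x i * pd (fun y => X y j) m x
  set D' := ∑ i, ∑ j, g x i j * pd (fun y => X y i) m x * X x j with hD'
  have hA : A' = A := by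
    rw [hA', Finset.sum_comm]
    exact Finset.sum_congr rfl fun _ _ => Finset.sum_congr rfl fun _ _ => by ring
  have hD : D' = D := by
    rw [hD', Finset.sum_comm]
    exact Finset.sum_congr rfl fun i _ => Finset.sum_congr rfl fun j _ => by rw [hsym]; ring
  have hL : ∑ k, g x m k * covD g X X x k = C + (1 / 2) * (A + A' - B) := by
    calc ∑ k, g x m k * covD g X X x k
        = C + ∑ i, ∑ j, (∑ k, g x m k * christoffel g k i j x) * X x i * X x j := by
          simp only [covD, mul_add, Finset.sum_add_distrib, Finset.mul_sum, Finset.sum_mul]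
          congr 1
          · rw [Finset.sum_comm]
            exact Finset.sum_congr rfl fun _ _ => Finset.sum_congr rfl fun _ _ => by ring
          · rw [Finset.sum_comm]
            refine Finset.sum_congr rfl fun _ _ => ?_
            rw [Finset.sum_comm]
            exact Finset.sum_congr rfl fun _ _ => Finset.sum_congr rfl fun _ _ => by ring
      _ = C + (1 / 2) * (A + A' - B) := by
          simp only [sum_mul_christoffel hinv, A, A', B, ← Finset.sum_add_distrib,
            ← Finset.sum_sub_distrib, Finset.mul_sum]
          congr 1
          exact Finset.sum_congr rfl fun _ _ => Finset.sum_congr rfl fun _ _ => by ring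
  have hR : ∑ i, X x i * dForm (lowerIndex g X) x i m = A + C - (B + D) := by
    simp only [dForm, lowerIndex, pd_sum_mul hg hX, A, B, C, D, ← Finset.sum_add_distrib,
      ← Finset.sum_sub_distrib, Finset.mul_sum]
    exact Finset.sum_congr rfl fun _ _ => Finset.sum_congr rfl fun _ _ => by ring
  rw [hL, hR, pd_sum_sum_mul hg hX]
  simp only [Finset.sum_add_distrib]
  linarith

theorem sum_mul_covD_self_of_unit (hsym : ∀ i j, g x i j = g x j i)
    (hinv : g x * ginv g x = 1) (hunit : ∀ y, ∑ i, ∑ j, g y i j * X y i * X y j = 1) (m : Fin n) :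
    ∑ k, g x m k * covD g X X x k = ∑ i, X x i * dForm (lowerIndex g X) x i m := by
  rw [sum_mul_covD_self hg hX hsym hinv, funext hunit]
  simp [pd]

end LeviCivita

def jacobian {m n : ℕ} (φ : (Fin n → ℝ) → Fin m → ℝ) (x : Fin n → ℝ) : Matrix (Fin m) (Fin n) ℝ :=
  Matrix.of fun α i => pd (fun y => φ y α) i x

section PullMetric

variable {h : (Fin 2 → ℝ) → Matrix (Fin 2) (Fin 2) ℝ} {φ : (Fin 3 → ℝ) → Fin 2 → ℝ}
  {lam : (Fin 3 → ℝ) → ℝ} {θ : (Fin 3 → ℝ) → Fin 3 → ℝ}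

theorem pullMetric_eq (x : Fin 3 → ℝ) :
    pullMetric h φ lam θ x =
      (jacobian φ x)ᵀ * ((lam x ^ 2)⁻¹ • h (φ x)) * jacobian φ x + vecMulVec (θ x) (θ x) := by
  ext i j
  simp only [pullMetric, jacobian, Matrix.of_apply, Matrix.add_apply, Matrix.mul_apply,
    Matrix.transpose_apply, Matrix.smul_apply, smul_eq_mul, vecMulVec_apply, Finset.mul_sum,
    Finset.sum_mul]
  rw [Finset.sum_comm]
  exact congrArg (· + _) (Finset.sum_congr rfl fun _ _ => Finset.sum_congr rfl fun _ _ => by ring)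

theorem isSymm_pullMetric (hh : IsMetric h) (x : Fin 3 → ℝ) : (pullMetric h φ lam θ x).IsSymm := by
  rw [pullMetric_eq]
  refine IsSymm.add ?_ (by simp [IsSymm])
  simp [IsSymm, Matrix.transpose_mul, (hh.2 (φ x)).1.eq, Matrix.mul_assoc]

theorem contDiff_pullMetric (hh : IsMetric h) (hφ : ∀ α, ContDiff ℝ (⊤ : ℕ∞) fun x => φ x α)
    (hlam : ContDiff ℝ (⊤ : ℕ∞) lam) (hlam0 : ∀ x, lam x ≠ 0) (hθ : SmoothVF θ) (i j : Fin 3) :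
    ContDiff ℝ (⊤ : ℕ∞) fun x => pullMetric h φ lam θ x i j := by
  have hpd : ∀ α k, ContDiff ℝ (⊤ : ℕ∞) (pd (fun y => φ y α) k) := fun α k =>
    ((hφ α).fderiv_right le_rfl).clm_apply contDiff_const
  refine ((contDiff_const.div (hlam.pow 2) fun x => pow_ne_zero 2 (hlam0 x)).mul ?_).add
    ((hθ i).mul (hθ j))
  refine ContDiff.sum fun α _ => ContDiff.sum fun β _ => ?_
  exact (((hh.1 α β).comp (contDiff_pi.mpr hφ)).mul (hpd α i)).mul (hpd β j)

theorem pullMetric_mulVec_of_vertical {U : (Fin 3 → ℝ) → Fin 3 → ℝ} (hU : Vertical φ U)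
    (x : Fin 3 → ℝ) : pullMetric h φ lam θ x *ᵥ U x = (θ x ⬝ᵥ U x) • θ x := by
  rw [pullMetric_eq]
  exact mulVec_add_vecMulVec_of_mulVec_eq_zero _ _ _ (funext (hU x))

end PullMetric

section SemiConformal

variable {h : (Fin 2 → ℝ) → Matrix (Fin 2) (Fin 2) ℝ} {φ : (Fin 3 → ℝ) → Fin 2 → ℝ}
  {lam : (Fin 3 → ℝ) → ℝ} {θ : (Fin 3 → ℝ) → Fin 3 → ℝ} {V : (Fin 3 → ℝ) → Fin 3 → ℝ}
  (hsub : ∀ x, Function.Surjective (jacobian φ x).mulVec) (hV : Vertical φ V) (hV0 : ∀ x, V x ≠ 0)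
include hsub hV hV0

theorem ker_jacobian_eq_span (x : Fin 3 → ℝ) :
    LinearMap.ker (jacobian φ x).mulVecLin = Submodule.span ℝ {V x} :=
  ker_mulVecLin_eq_span_singleton (hsub x) rfl (funext (hV x)) (hV0 x)

variable (hh : IsMetric h) (hlam0 : ∀ x, lam x ≠ 0) (hθV : ∀ x, θ x ⬝ᵥ V x ≠ 0)
include hh hlam0 hθV

theorem isUnit_pullMetric (x : Fin 3 → ℝ) : IsUnit (pullMetric h φ lam θ x) := by
  rw [pullMetric_eq]
  exact isUnit_add_vecMulVec ((hh.2 (φ x)).2.smul (inv_pos.mpr (sq_pos_of_ne_zero (hlam0 x))))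
    (ker_jacobian_eq_span hsub hV hV0 x) (hθV x)

theorem semiConformal_pullMetric : SemiConformal (pullMetric h φ lam θ) h φ lam := by
  intro x α β
  have hH : IsUnit (h (φ x)).det := isUnit_iff_ne_zero.mpr (hh.2 (φ x)).2.det_pos.ne'
  have hinv : ((lam x ^ 2)⁻¹ • h (φ x))⁻¹ = lam x ^ 2 • (h (φ x))⁻¹ := by
    refine inv_eq_left_inv ?_
    rw [smul_mul_smul, mul_inv_cancel₀ (pow_ne_zero 2 (hlam0 x)), one_smul,
      nonsing_inv_mul _ hH]
  have key := mul_inv_add_vecMulVec_mul_transpose (hsub x)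
    ((hh.2 (φ x)).2.smul (inv_pos.mpr (sq_pos_of_ne_zero (hlam0 x))))
    (ker_jacobian_eq_span hsub hV hV0 x) (hθV x)
  rw [hinv, ← pullMetric_eq] at key
  exact (mul_mul_transpose_apply _ _ α β).symm.trans (congrFun (congrFun key α) β)

end SemiConformal

theorem mulVec_Hproj_sharp {g : (Fin 3 → ℝ) → Matrix (Fin 3) (Fin 3) ℝ}
    {U η : (Fin 3 → ℝ) → Fin 3 → ℝ} {x : Fin 3 → ℝ} (hsym : (g x).IsSymm) (hG : IsUnit (g x)) :
    g x *ᵥ Hproj g U (fun y l => ∑ j, ginv g y l j * η y j) x =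
      η x - (η x ⬝ᵥ U x) • (g x *ᵥ U x) := by
  have hGdet : IsUnit (g x).det := (isUnit_iff_isUnit_det _).mp hG
  have hproj : Hproj g U (fun y l => ∑ j, ginv g y l j * η y j) x =
      (g x)⁻¹ *ᵥ η x - (((g x)⁻¹ *ᵥ η x) ⬝ᵥ (g x *ᵥ U x)) • U x := by
    ext k
    simp only [Hproj, Pi.sub_apply, Pi.smul_apply, smul_eq_mul, dotProduct_mulVec_eq_sum_sum]
    rfl
  rw [hproj, mulVec_sub, mulVec_smul, mulVec_mulVec, mul_nonsing_inv _ hGdet, one_mulVec,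
    dotProduct_mulVec, ← mulVec_transpose, hsym.eq, mulVec_mulVec, mul_nonsing_inv _ hGdet,
    one_mulVec]

section MeanCurvature

variable {h : (Fin 2 → ℝ) → Matrix (Fin 2) (Fin 2) ℝ} {φ : (Fin 3 → ℝ) → Fin 2 → ℝ}
  {lam : (Fin 3 → ℝ) → ℝ} {θ η U : (Fin 3 → ℝ) → Fin 3 → ℝ}

theorem sq_dotProduct_eq_one_of_unitField (hU : Vertical φ U)
    (hunit : UnitField (pullMetric h φ lam θ) U) (y : Fin 3 → ℝ) : (θ y ⬝ᵥ U y) ^ 2 = 1 := by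
  rw [← hunit y, ← dotProduct_mulVec_eq_sum_sum, pullMetric_mulVec_of_vertical hU,
    dotProduct_smul, smul_eq_mul, dotProduct_comm, sq]

theorem mulVec_covD_pullMetric (hh : IsMetric h) (hφ : ∀ α, ContDiff ℝ (⊤ : ℕ∞) fun x => φ x α)
    (hlam : ContDiff ℝ (⊤ : ℕ∞) lam) (hlam0 : ∀ x, lam x ≠ 0) (hθ : SmoothVF θ)
    (hUs : SmoothVF U) (hU : Vertical φ U) (hunit : UnitField (pullMetric h φ lam θ) U)
    {x : Fin 3 → ℝ} (hG : IsUnit (pullMetric h φ lam θ x))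
    (hint : ∀ m, ∑ i, U x i * (dForm θ x i m + (η x i * θ x m - η x m * θ x i)) = 0) :
    pullMetric h φ lam θ x *ᵥ covD (pullMetric h φ lam θ) U U x =
      η x - (η x ⬝ᵥ U x) • (pullMetric h φ lam θ x *ᵥ U x) := by
  set g := pullMetric h φ lam θ
  set ε : (Fin 3 → ℝ) → ℝ := fun y => θ y ⬝ᵥ U y
  have hdiff : ∀ {f : (Fin 3 → ℝ) → ℝ}, ContDiff ℝ (⊤ : ℕ∞) f → DifferentiableAt ℝ f x :=
    fun hf => hf.differentiable (by simp) x
  have hflat : lowerIndex g U = fun y k => ε y * θ y k := funext fun y => funext fun k =>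
    congrFun (pullMetric_mulVec_of_vertical hU y) k
  have hε : DifferentiableAt ℝ ε x :=
    DifferentiableAt.fun_sum fun j _ => (hdiff (hθ j)).mul (hdiff (hUs j))
  have hε0 : ∀ i, pd ε i x = 0 :=
    pd_eq_zero_of_sq_eq_one hε (sq_dotProduct_eq_one_of_unitField hU hunit)
  have hinv : g x * ginv g x = 1 :=
    mul_nonsing_inv _ ((isUnit_iff_isUnit_det _).mp hG)
  ext m
  have hcov := sum_mul_covD_self_of_unit
    (fun i j => hdiff (contDiff_pullMetric hh hφ hlam hlam0 hθ i j)) (fun k => hdiff (hUs k))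
    (fun i j => ((isSymm_pullMetric hh x).apply j i)) hinv hunit m
  rw [hflat] at hcov
  simp only [dForm_mul_of_pd_eq_zero hε (fun k => hdiff (hθ k)) hε0] at hcov
  have hUη : ∑ i, U x i * (η x i * θ x m) = (η x ⬝ᵥ U x) * θ x m := by
    simp only [dotProduct, Finset.sum_mul]
    exact Finset.sum_congr rfl fun _ _ => by ring
  have hUθ : ∑ i, U x i * (η x m * θ x i) = η x m * ε x := by
    simp only [ε, dotProduct, Finset.mul_sum]
    exact Finset.sum_congr rfl fun _ _ => by ring
  have hint' := hint m
  simp only [mul_add, mul_sub, Finset.sum_add_distrib, Finset.sum_sub_distrib, hUη, hUθ] at hint'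
  rw [show ∑ i, U x i * (ε x * dForm θ x i m) = ε x * ∑ i, U x i * dForm θ x i m by
    rw [Finset.mul_sum]; exact Finset.sum_congr rfl fun _ _ => mul_left_comm _ _ _] at hcov
  change ∑ k, g x m k * covD g U U x k = _
  rw [hcov, Pi.sub_apply, Pi.smul_apply, pullMetric_mulVec_of_vertical hU, Pi.smul_apply,
    smul_eq_mul, smul_eq_mul]
  linear_combination ε x * hint' + η x m * sq_dotProduct_eq_one_of_unitField hU hunit x

theorem covD_pullMetric_eq_Hproj (hh : IsMetric h)
    (hφ : ∀ α, ContDiff ℝ (⊤ : ℕ∞) fun x => φ x α) (hlam : ContDiff ℝ (⊤ : ℕ∞) lam)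
    (hlam0 : ∀ x, lam x ≠ 0) (hθ : SmoothVF θ) (hUs : SmoothVF U) (hU : Vertical φ U)
    (hunit : UnitField (pullMetric h φ lam θ) U) {x : Fin 3 → ℝ}
    (hG : IsUnit (pullMetric h φ lam θ x))
    (hint : ∀ m, ∑ i, U x i * (dForm θ x i m + (η x i * θ x m - η x m * θ x i)) = 0) :
    covD (pullMetric h φ lam θ) U U x =
      Hproj (pullMetric h φ lam θ) U
        (fun y l => ∑ j, ginv (pullMetric h φ lam θ) y l j * η y j) x :=
  mulVec_injective_iff_isUnit.mpr hG <| by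
    rw [mulVec_covD_pullMetric hh hφ hlam hlam0 hθ hUs hU hunit hG hint,
      mulVec_Hproj_sharp (isSymm_pullMetric hh x) hG]

end MeanCurvature

theorem sum_mul_dForm_lowerIndex_eq_zero {n : ℕ} {g : (Fin n → ℝ) → Matrix (Fin n) (Fin n) ℝ}
    {X : (Fin n → ℝ) → Fin n → ℝ} (hg : IsMetric g) (hX : SmoothVF X)
    (hunit : ∀ y, ∑ i, ∑ j, g y i j * X y i * X y j = 1) {x : Fin n → ℝ}
    (hgeod : ∀ k, covD g X X x k = 0) (m : Fin n) :
    ∑ i, X x i * dForm (lowerIndex g X) x i m = 0 := by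
  have hinv : g x * ginv g x = 1 :=
    mul_nonsing_inv _ (isUnit_iff_ne_zero.mpr (hg.2 x).2.det_pos.ne')
  rw [← sum_mul_covD_self_of_unit (fun i j => (hg.1 i j).differentiable (by simp) x)
    (fun k => (hX k).differentiable (by simp) x) (fun i j => (hg.2 x).1.apply j i) hinv hunit m]
  simp [hgeod]

theorem prescribed_mean_curvature_general
    (gt : (Fin 3 → ℝ) → Matrix (Fin 3) (Fin 3) ℝ)
    (h : (Fin 2 → ℝ) → Matrix (Fin 2) (Fin 2) ℝ)
    (φ : (Fin 3 → ℝ) → Fin 2 → ℝ) (lam : (Fin 3 → ℝ) → ℝ)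
    (Ut : (Fin 3 → ℝ) → Fin 3 → ℝ)
    (η θ : (Fin 3 → ℝ) → Fin 3 → ℝ)
    (hgt : IsMetric gt) (hh : IsMetric h)
    (hφ : ∀ α, ContDiff ℝ (⊤ : ℕ∞) fun x => φ x α)
    (hsub : ∀ x, Function.Surjective fun v : Fin 3 → ℝ =>
      (fun α => ∑ i, pd (fun y => φ y α) i x * v i : Fin 2 → ℝ))
    (hlam : ContDiff ℝ (⊤ : ℕ∞) lam) (hlampos : ∀ x, 0 < lam x)
    (hUt : SmoothVF Ut) (hUtvert : Vertical φ Ut) (hUtunit : UnitField gt Ut)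
    -- `φ` is a harmonic morphism : being semi-conformal onto a surface, this is
    -- equivalent to the minimality (= geodesity) of the fibres
    (hmin : ∀ x k, covD gt Ut Ut x k = 0)
    (hθs : SmoothVF θ)
    -- `dθ + η ∧ θ = Ω̃`, where `Ω̃ = dθ̃` and `θ̃ = g̃(Ũ, ·)`
    (hext : ∀ x i j,
      (pd (fun y => θ y j) i x - pd (fun y => θ y i) j x)
        + (η x i * θ x j - η x j * θ x i) =
      pd (fun y => flat gt Ut j y) i x - pd (fun y => flat gt Ut i y) j x)
    -- `θ(Ũ) ≠ 0` at every point
    (hθU : ∀ x, (∑ j, θ x j * Ut x j) ≠ 0) :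
    SemiConformal (pullMetric h φ lam θ) h φ lam ∧
    (∀ U : (Fin 3 → ℝ) → Fin 3 → ℝ, SmoothVF U → Vertical φ U →
      UnitField (pullMetric h φ lam θ) U →
      ∀ x k, covD (pullMetric h φ lam θ) U U x k =
        Hproj (pullMetric h φ lam θ) U
          (fun y l => ∑ j, ginv (pullMetric h φ lam θ) y l j * η y j) x k) := by
  have hlam0 x : lam x ≠ 0 := (hlampos x).ne'
  have hUt0 x : Ut x ≠ 0 := fun h0 => by simpa [h0] using hUtunit x
  refine ⟨semiConformal_pullMetric hsub hUtvert hUt0 hh hlam0 hθU,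
    fun U hUs hU hunit x => congrFun ?_⟩
  refine covD_pullMetric_eq_Hproj hh hφ hlam hlam0 hθs hUs hU hunit
    (isUnit_pullMetric hsub hUtvert hUt0 hh hlam0 hθU x) fun m => ?_
  obtain ⟨c, hc⟩ := Submodule.mem_span_singleton.mp
    (ker_jacobian_eq_span hsub hUtvert hUt0 x ▸ funext (hU x) : U x ∈ Submodule.span ℝ {Ut x})
  calc ∑ i, U x i * (dForm θ x i m + (η x i * θ x m - η x m * θ x i))
      = c * ∑ i, Ut x i * dForm (lowerIndex gt Ut) x i m := by
        simp only [Finset.mul_sum, ← hc, Pi.smul_apply, smul_eq_mul, mul_assoc]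
        exact Finset.sum_congr rfl fun i _ => congrArg _ (congrArg _ (hext x i m))
    _ = 0 := by rw [sum_mul_dForm_lowerIndex_eq_zero hgt hUt hUtunit (hmin x), mul_zero]

/-- Given a submersive harmonic morphism `φ : (M³,g̃) → (N²,h)` with
dilation `λ` and integrability 2-form `Ω̃ = dθ̃` (`θ̃ = g̃(Ũ,·)`), a 1-form `η` and a 1-form
`θ` with `dθ + η∧θ = Ω̃` and `θ(Ũ) ≠ 0` everywhere, the map
`φ : (M³, g = φ*h/λ² + θ²) → (N²,h)` is semi-conformal and the mean curvature of its fibres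
is the `g`-horizontal part of `η♯`. -/
theorem prescribed_mean_curvature
    (gt : (Fin 3 → ℝ) → Matrix (Fin 3) (Fin 3) ℝ)
    (h : (Fin 2 → ℝ) → Matrix (Fin 2) (Fin 2) ℝ)
    (φ : (Fin 3 → ℝ) → Fin 2 → ℝ) (lam : (Fin 3 → ℝ) → ℝ)
    (Ut : (Fin 3 → ℝ) → Fin 3 → ℝ)
    (η θ : (Fin 3 → ℝ) → Fin 3 → ℝ)
    (hgt : IsMetric gt) (hh : IsMetric h)
    (hφ : ∀ α, ContDiff ℝ (⊤ : ℕ∞) fun x => φ x α)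
    (hsub : ∀ x, Function.Surjective fun v : Fin 3 → ℝ =>
      (fun α => ∑ i, pd (fun y => φ y α) i x * v i : Fin 2 → ℝ))
    (hlam : ContDiff ℝ (⊤ : ℕ∞) lam) (hlampos : ∀ x, 0 < lam x)
    -- `φ` is semi-conformal with dilation `λ` with respect to `g̃`
    (hsc : SemiConformal gt h φ lam)
    (hUt : SmoothVF Ut) (hUtvert : Vertical φ Ut) (hUtunit : UnitField gt Ut)
    -- `φ` is a harmonic morphism : being semi-conformal onto a surface, this is
    -- equivalent to the minimality (= geodesity) of the fibres
    (hmin : ∀ x k, covD gt Ut Ut x k = 0)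
    (hηs : SmoothVF η) (hθs : SmoothVF θ)
    -- `dθ + η ∧ θ = Ω̃`, where `Ω̃ = dθ̃` and `θ̃ = g̃(Ũ, ·)`
    (hext : ∀ x i j,
      (pd (fun y => θ y j) i x - pd (fun y => θ y i) j x)
        + (η x i * θ x j - η x j * θ x i) =
      pd (fun y => flat gt Ut j y) i x - pd (fun y => flat gt Ut i y) j x)
    -- `θ(Ũ) ≠ 0` at every point
    (hθU : ∀ x, (∑ j, θ x j * Ut x j) ≠ 0) :
    SemiConformal (pullMetric h φ lam θ) h φ lam ∧
    (∀ U : (Fin 3 → ℝ) → Fin 3 → ℝ, SmoothVF U → Vertical φ U →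
      UnitField (pullMetric h φ lam θ) U →
      ∀ x k, covD (pullMetric h φ lam θ) U U x k =
        Hproj (pullMetric h φ lam θ) U
          (fun y l => ∑ j, ginv (pullMetric h φ lam θ) y l j * η y j) x k) :=
  prescribed_mean_curvature_general gt h φ lam Ut η θ hgt hh hφ hsub hlam hlampos hUt hUtvert
    hUtunit hmin hθs hext hθU
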